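/- Let A be a unital K-algebra with sr(A) = n ≥ 2 and er(A) < n. Then for any (possibly non-unital) K-algebra B and two-sided ideal I of B with B/I ≅ A and sr(I) ≤ n, one has sr(B) = n. -/

import Mathlib

open scoped BigOperators

variable {R : Type*}

/-- A column is unimodular if its entries admit a left Bezout relation summing to `1`. -/
def Unimodular [Ring R] {m : ℕ} (b : Fin m → R) : Prop :=
  ∃ a : Fin m → R, ∑ i, a i * b i = 1

/-- An `(n+1)`-column is reducible if adding left multiples of the last entry to the first
`n` entries yields a unimodular `n`-column. -/
def Reducible [Ring R] {n : ℕ} (b : Fin (n + 1) → R) : Prop :=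
  ∃ v : Fin n → R, Unimodular (fun i : Fin n => b i.castSucc + v i * b (Fin.last n))

/-- The stable range condition: every unimodular column of length `> n` is reducible. -/
def SRleq (R : Type*) [Ring R] (n : ℕ) : Prop :=
  ∀ m : ℕ, n ≤ m → ∀ b : Fin (m + 1) → R, Unimodular b → Reducible b

/-- The Bass stable rank, as an element of `ℕ∞`. -/
noncomputable def sr (R : Type*) [Ring R] : ℕ∞ :=
  sInf {c : ℕ∞ | ∃ n : ℕ, c = n ∧ SRleq R n}

/-- Elementary matrices (transvections). -/
def IsElemMat [Ring R] {t : ℕ} (M : Matrix (Fin t) (Fin t) R) : Prop :=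
  ∃ (i j : Fin t) (c : R), i ≠ j ∧ M = 1 + Matrix.single i j c

/-- `ERleq R k` : for every `t ≥ k + 1`, the elementary group `E_t(R)` acts transitively on
unimodular `t`-columns. -/
def ERleq (R : Type*) [Ring R] (k : ℕ) : Prop :=
  ∀ t : ℕ, k + 1 ≤ t → ∀ b c : Fin t → R, Unimodular b → Unimodular c →
    ∃ L : List (Matrix (Fin t) (Fin t) R), (∀ M ∈ L, IsElemMat M) ∧ L.prod.mulVec b = c

/-- The elementary rank, as an element of `ℕ∞`. -/
noncomputable def er (R : Type*) [Ring R] : ℕ∞ :=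
  sInf {c : ℕ∞ | ∃ k : ℕ, c = k ∧ ERleq R k}

/-- Vaserstein's `I`-unimodular columns relative to a two-sided ideal `I` of `R`:
the first entry is congruent to `1` mod `I`, the others lie in `I`, and there is a Bezout
relation of the same shape. -/
def RelUnimodular [Ring R] (I : TwoSidedIdeal R) {m : ℕ} (b : Fin (m + 1) → R) : Prop :=
  b 0 - 1 ∈ I ∧ (∀ i, i ≠ 0 → b i ∈ I) ∧
    ∃ a : Fin (m + 1) → R, (a 0 - 1 ∈ I) ∧ (∀ i, i ≠ 0 → a i ∈ I) ∧ ∑ i, a i * b i = 1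

def RelReducible [Ring R] (I : TwoSidedIdeal R) {m : ℕ} (b : Fin (m + 2) → R) : Prop :=
  ∃ v : Fin (m + 1) → R, (∀ i, v i ∈ I) ∧
    RelUnimodular I (fun i : Fin (m + 1) => b i.castSucc + v i * b (Fin.last (m + 1)))

/-- Relative (Vaserstein) stable rank `≤ n` for a two-sided ideal: every `I`-unimodular
column of length at least `n + 1` is reducible. -/
def RelSRleq [Ring R] (I : TwoSidedIdeal R) (n : ℕ) : Prop :=
  ∀ m : ℕ, n ≤ m + 1 → ∀ b : Fin (m + 2) → R, RelUnimodular I b → RelReducible I b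

/-- The relative stable rank of a two-sided ideal, as an element of `ℕ∞`. -/
noncomputable def relSr [Ring R] (I : TwoSidedIdeal R) : ℕ∞ :=
  sInf {c : ℕ∞ | ∃ n : ℕ, c = n ∧ RelSRleq I n}

/-- The canonical copy of a non-unital ring `B` as a two-sided ideal of its
`ℤ`-unitization. -/
def nuIdeal (B : Type*) [NonUnitalRing B] : TwoSidedIdeal (Unitization ℤ B) :=
  TwoSidedIdeal.mk' {x | x.fst = 0}
    (by simp)
    (fun hx hy => by simp_all)
    (fun hx => by simp_all)
    (fun {x y} hy => by simp_all)
    (fun {x y} hx => by simp_all)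

/-- The lift of a two-sided ideal of a non-unital ring `B` to a two-sided ideal of the
`ℤ`-unitization of `B`. -/
def liftIdeal {B : Type*} [NonUnitalRing B] (I : TwoSidedIdeal B) :
    TwoSidedIdeal (Unitization ℤ B) :=
  TwoSidedIdeal.mk' {x | x.fst = 0 ∧ x.snd ∈ I}
    ⟨by simp, by simpa using I.zero_mem⟩
    (fun hx hy => ⟨by simp [hx.1, hy.1], by simpa using I.add_mem hx.2 hy.2⟩)
    (fun hx => ⟨by simp [hx.1], by simpa using I.neg_mem hx.2⟩)
    (fun {x y} hy => ⟨by simp [hy.1], by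
        simp only [Unitization.snd_mul, hy.1, zero_smul, add_zero, Set.mem_setOf_eq]
        exact I.add_mem (I.zsmul_mem _ hy.2) (I.mul_mem_left _ _ hy.2)⟩)
    (fun {x y} hx => ⟨by simp [hx.1], by
        simp only [Unitization.snd_mul, hx.1, zero_smul, zero_add, Set.mem_setOf_eq]
        exact I.add_mem (I.zsmul_mem _ hx.2) (I.mul_mem_right _ _ hx.2)⟩)

/-- The Bass stable rank of a (possibly non-unital) ring, defined via Vaserstein's relative
stable rank of its canonical copy inside its `ℤ`-unitization. -/
noncomputable def srNU (B : Type*) [NonUnitalRing B] : ℕ∞ := relSr (R := Unitization ℤ B) (nuIdeal B)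

/-!
In `R = ℤ ⋉ B` the ideals `B` and `I` are the kernels of `fst` and of `(fst, ψ) : R → ℤ × A`,
where `ψ` extends `B → B/I ≃ A`. Since `ψ` maps `B` onto `A`, elementary matrices over `A` lift to
products of transvections that are `≡ 1 (mod B)`.

`sr(B) ≤ n`: reduce the image in `A` of a `B`-unimodular column of length `≥ n + 1` using
`sr(A) ≤ n` and lift the reduction. The shortened image has length `≥ n > er(A)`, so a lifted
elementary matrix makes the first entries `y` of the column `≡ e₀ (mod I)`. With `z = 1 - y₀ ∈ I`,
the identity `(1 + z)(1 - z) + z² = 1` shows that multiplying the last entry by `z` times its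
Bezout coefficient gives an `I`-unimodular column, which `sr(I) ≤ n` reduces.

`sr(B) ≥ n`: a unimodular column over `A` of length `≥ n` is the image of the first column of a
lifted elementary matrix; that column is `B`-unimodular, and its reduction maps to a reduction
over `A`.
-/

open Matrix TwoSidedIdeal

section Rank

variable {R : Type*} [Ring R]

theorem sInf_natCast_le_iff {P : ℕ → Prop} (hP : Monotone P) {n : ℕ} :
    sInf {c : ℕ∞ | ∃ k : ℕ, c = k ∧ P k} ≤ n ↔ P n := by
  refine ⟨fun h => ?_, fun h => sInf_le ⟨n, rfl, h⟩⟩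
  by_contra hn
  have : ((n + 1 : ℕ) : ℕ∞) ≤ sInf {c : ℕ∞ | ∃ k : ℕ, c = k ∧ P k} := by
    refine le_sInf fun c ⟨k, hc, hk⟩ => hc ▸ Nat.cast_le.mpr ?_
    by_contra! hkn
    exact hn (hP (Nat.le_of_lt_succ hkn) hk)
  exact absurd (Nat.cast_le.mp (this.trans h)) (by omega)

theorem SRleq.mono : Monotone (SRleq R) :=
  fun _ _ h hP m hm => hP m (h.trans hm)

theorem ERleq.mono : Monotone (ERleq R) :=
  fun _ _ h hP t ht => hP t (by omega)

theorem RelSRleq.mono (I : TwoSidedIdeal R) : Monotone (RelSRleq I) :=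
  fun _ _ h hP m hm => hP m (h.trans hm)

theorem sr_le_iff {n : ℕ} : sr R ≤ n ↔ SRleq R n :=
  sInf_natCast_le_iff SRleq.mono

theorem er_le_iff {n : ℕ} : er R ≤ n ↔ ERleq R n :=
  sInf_natCast_le_iff ERleq.mono

theorem relSr_le_iff {I : TwoSidedIdeal R} {n : ℕ} : relSr I ≤ n ↔ RelSRleq I n :=
  sInf_natCast_le_iff (RelSRleq.mono I)

end Rank

section Columns

variable {R S : Type*} [Ring R] [Ring S]

theorem unimodular_single_zero {m : ℕ} : Unimodular (Pi.single 0 1 : Fin (m + 1) → R) :=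
  ⟨Pi.single 0 1, by simp [Pi.single_apply]⟩

theorem Unimodular.map (f : R →+* S) {m : ℕ} {b : Fin m → R} (hb : Unimodular b) :
    Unimodular (f ∘ b) :=
  let ⟨a, ha⟩ := hb
  ⟨f ∘ a, by simpa [dotProduct] using congrArg f ha⟩

theorem RingHom.comp_mulVec (g : R →+* S) {n : Type*} [Fintype n] (M : Matrix n n R) (b : n → R) :
    g ∘ (M *ᵥ b) = M.map g *ᵥ (g ∘ b) :=
  funext (g.map_mulVec M b)

theorem RelUnimodular.unimodular {I : TwoSidedIdeal R} {m : ℕ} {b : Fin (m + 1) → R}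
    (hb : RelUnimodular I b) : Unimodular b :=
  let ⟨_, _, a, _, _, ha⟩ := hb
  ⟨a, ha⟩

theorem RelUnimodular.mono {I J : TwoSidedIdeal R} (hIJ : I ≤ J) {m : ℕ} {b : Fin (m + 1) → R}
    (hb : RelUnimodular I b) : RelUnimodular J b :=
  let ⟨h0, hb, a, ha0, ha, hab⟩ := hb
  ⟨hIJ h0, fun i hi => hIJ (hb i hi), a, hIJ ha0, fun i hi => hIJ (ha i hi), hab⟩

theorem RingHom.comp_single_one (f : R →+* S) {ι : Type*} [DecidableEq ι] (i : ι) :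
    f ∘ (Pi.single i 1 : ι → R) = Pi.single i 1 := by
  funext j
  simp [Pi.single_apply, apply_ite f]

variable (f : R →+* S)

theorem comp_eq_single_zero_iff {m : ℕ} {b : Fin (m + 1) → R} :
    f ∘ b = Pi.single 0 1 ↔ b 0 - 1 ∈ ker f ∧ ∀ i, i ≠ 0 → b i ∈ ker f := by
  simp only [funext_iff, Function.comp_apply, mem_ker, map_sub, map_one, sub_eq_zero]
  refine ⟨fun h => ⟨by simpa using h 0, fun i hi => by simpa [hi] using h i⟩, fun ⟨h0, h⟩ i => ?_⟩
  rcases eq_or_ne i 0 with rfl | hi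
  · simpa using h0
  · simpa [hi] using h i hi

theorem relUnimodular_ker_iff {m : ℕ} {b : Fin (m + 1) → R} :
    RelUnimodular (ker f) b ↔
      f ∘ b = Pi.single 0 1 ∧ ∃ a, f ∘ a = Pi.single 0 1 ∧ a ⬝ᵥ b = 1 := by
  simp only [RelUnimodular, comp_eq_single_zero_iff, and_assoc, dotProduct]

theorem single_zero_eq_snoc {α : Type*} [Zero α] {m : ℕ} (a : α) :
    (Pi.single 0 a : Fin (m + 2) → α) = Fin.snoc (Pi.single 0 a) 0 := by
  funext i
  induction i using Fin.lastCases with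
  | last => simp [Fin.last_pos.ne']
  | cast i => simp [Pi.single_apply]

theorem snoc_dotProduct_snoc {α : Type*} [NonUnitalNonAssocSemiring α] {m : ℕ} (a b : Fin m → α)
    (s t : α) : (Fin.snoc a s : Fin (m + 1) → α) ⬝ᵥ Fin.snoc b t = a ⬝ᵥ b + s * t := by
  simp [dotProduct, Fin.sum_univ_castSucc]

theorem relUnimodular_ker_snoc_iff {m : ℕ} {y : Fin (m + 1) → R} {t : R} :
    RelUnimodular (ker f) (Fin.snoc y t : Fin (m + 2) → R) ↔
      f ∘ y = Pi.single 0 1 ∧ f t = 0 ∧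
        ∃ a s, f ∘ a = Pi.single 0 1 ∧ f s = 0 ∧ a ⬝ᵥ y + s * t = 1 := by
  simp only [relUnimodular_ker_iff, Fin.comp_snoc, single_zero_eq_snoc, Fin.snoc_inj, and_assoc]
  refine and_congr_right fun _ => and_congr_right fun _ =>
    ⟨fun ⟨a, ha, hab⟩ => ⟨Fin.init a, a (Fin.last _), ?_⟩,
      fun ⟨a, s, ha, hs, hab⟩ => ⟨Fin.snoc a s, ?_⟩⟩
  · rw [← Fin.snoc_init_self a] at ha hab
    rw [Fin.comp_snoc, Fin.snoc_inj] at ha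
    rw [snoc_dotProduct_snoc] at hab
    exact ⟨ha.1, ha.2, hab⟩
  · rw [Fin.comp_snoc, Fin.snoc_inj, snoc_dotProduct_snoc]
    exact ⟨⟨ha, hs⟩, hab⟩

end Columns

section Congruence

variable {R S : Type*} [Ring R] [Ring S] {n : Type*} [Fintype n] [DecidableEq n]

theorem one_add_single_mul_one_add_single {i j : n} (hij : i ≠ j) (c d : R) :
    (1 + single i j c) * (1 + single i j d) = 1 + single i j (c + d) := by
  have h0 : single i j c * single i j d = 0 := single_mul_single_of_ne c i j i hij.symm d
  rw [single_add, add_mul, mul_add, mul_add, h0]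
  noncomm_ring

def transvectionUnit {i j : n} (hij : i ≠ j) (c : R) : (Matrix n n R)ˣ where
  val := 1 + single i j c
  inv := 1 + single i j (-c)
  val_inv := by simp [one_add_single_mul_one_add_single hij]
  inv_val := by simp [one_add_single_mul_one_add_single hij]

theorem map_transvectionUnit {i j : n} (hij : i ≠ j) (c : R) (f : R →+* S) :
    (transvectionUnit hij c : Matrix n n R).map f = 1 + single i j (f c) := by
  simp [transvectionUnit, Matrix.map_add, Matrix.map_one]

def congruenceSubgroup (f : R →+* S) (n : Type*) [Fintype n] [DecidableEq n] :
    Subgroup (Matrix n n R)ˣ :=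
  (Units.map f.mapMatrix.toMonoidHom).ker

variable {f : R →+* S}

theorem mem_congruenceSubgroup {M : (Matrix n n R)ˣ} :
    M ∈ congruenceSubgroup f n ↔ (M : Matrix n n R).map f = 1 := by
  simp [congruenceSubgroup, Units.ext_iff]

variable {A : Type*} [Ring A]

theorem exists_mem_congruenceSubgroup_map_eq_prod (ψ : R →+* A)
    (hψ : ∀ a, ∃ r, f r = 0 ∧ ψ r = a) {t : ℕ} (L : List (Matrix (Fin t) (Fin t) A))
    (hL : ∀ M ∈ L, IsElemMat M) :
    ∃ M ∈ congruenceSubgroup f (Fin t), (M : Matrix (Fin t) (Fin t) R).map ψ = L.prod := by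
  induction L with
  | nil => exact ⟨1, one_mem _, by simp⟩
  | cons T L ih =>
    obtain ⟨M, hM, hMψ⟩ := ih fun M hM => hL M (List.mem_cons_of_mem _ hM)
    obtain ⟨i, j, c, hij, rfl⟩ := hL T List.mem_cons_self
    obtain ⟨r, hfr, hψr⟩ := hψ c
    refine ⟨transvectionUnit hij r * M, mul_mem ?_ hM, ?_⟩
    · rw [mem_congruenceSubgroup, map_transvectionUnit, hfr, single_zero, add_zero]
    · rw [Units.val_mul, Matrix.map_mul, map_transvectionUnit, hψr, hMψ, List.prod_cons]

theorem comp_mulVec_of_mem {M : (Matrix n n R)ˣ} (hM : M ∈ congruenceSubgroup f n) (b : n → R) :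
    f ∘ ((M : Matrix n n R) *ᵥ b) = f ∘ b := by
  rw [f.comp_mulVec, mem_congruenceSubgroup.mp hM, one_mulVec]

theorem comp_vecMul_of_mem {M : (Matrix n n R)ˣ} (hM : M ∈ congruenceSubgroup f n) (a : n → R) :
    f ∘ (a ᵥ* (M : Matrix n n R)) = f ∘ a := by
  funext i
  rw [Function.comp_apply, RingHom.map_vecMul, mem_congruenceSubgroup.mp hM, vecMul_one]

theorem vecMul_inv_dotProduct_mulVec (M : (Matrix n n R)ˣ) (a b : n → R) :
    (a ᵥ* (↑M⁻¹ : Matrix n n R)) ⬝ᵥ ((M : Matrix n n R) *ᵥ b) = a ⬝ᵥ b := by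
  rw [dotProduct_mulVec, vecMul_vecMul, M.inv_mul, vecMul_one]

end Congruence

section Relative

variable {R S A : Type*} [Ring R] [Ring S] [Ring A] {f : R →+* S} {m : ℕ}

theorem mulVec_add_mul_const {n : Type*} [Fintype n] (M : Matrix n n R) (y w : n → R) (t : R) :
    M *ᵥ (fun i => y i + w i * t) = fun i => (M *ᵥ y) i + (M *ᵥ w) i * t := by
  funext i
  simp only [mulVec, dotProduct, mul_add, Finset.sum_add_distrib, Finset.sum_mul, mul_assoc]

theorem relUnimodular_ker_single_zero :
    RelUnimodular (ker f) (Pi.single 0 1 : Fin (m + 1) → R) :=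
  (relUnimodular_ker_iff f).mpr ⟨f.comp_single_one 0, _, f.comp_single_one 0, by simp⟩

theorem RelUnimodular.mulVec_of_mem {M : (Matrix (Fin (m + 1)) (Fin (m + 1)) R)ˣ}
    (hM : M ∈ congruenceSubgroup f _) {b : Fin (m + 1) → R} (hb : RelUnimodular (ker f) b) :
    RelUnimodular (ker f) ((M : Matrix (Fin (m + 1)) (Fin (m + 1)) R) *ᵥ b) := by
  obtain ⟨hb, a, ha, hab⟩ := (relUnimodular_ker_iff f).mp hb
  exact (relUnimodular_ker_iff f).mpr ⟨(comp_mulVec_of_mem hM b).trans hb, a ᵥ* ↑M⁻¹,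
    (comp_vecMul_of_mem (inv_mem hM) a).trans ha, (vecMul_inv_dotProduct_mulVec M a b).trans hab⟩

theorem RelUnimodular.snoc_mulVec {M : (Matrix (Fin (m + 1)) (Fin (m + 1)) R)ˣ}
    (hM : M ∈ congruenceSubgroup f _) {y : Fin (m + 1) → R} {t : R}
    (h : RelUnimodular (ker f) (Fin.snoc y t : Fin (m + 2) → R)) :
    RelUnimodular (ker f) (Fin.snoc (↑M *ᵥ y) t : Fin (m + 2) → R) := by
  obtain ⟨hy, ht, a, s, ha, hs, has⟩ := (relUnimodular_ker_snoc_iff f).mp h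
  exact (relUnimodular_ker_snoc_iff f).mpr ⟨(comp_mulVec_of_mem hM y).trans hy, ht, a ᵥ* ↑M⁻¹, s,
    (comp_vecMul_of_mem (inv_mem hM) a).trans ha, hs, by rw [vecMul_inv_dotProduct_mulVec, has]⟩

theorem RelUnimodular.snoc_add {y v : Fin (m + 1) → R} {t : R} (hv : ∀ i, v i ∈ ker f)
    (h : RelUnimodular (ker f) (Fin.snoc y t : Fin (m + 2) → R)) :
    RelUnimodular (ker f) (Fin.snoc (fun i => y i + v i * t) t : Fin (m + 2) → R) := by
  obtain ⟨hy, ht, a, s, ha, hs, has⟩ := (relUnimodular_ker_snoc_iff f).mp h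
  have hfv : f ∘ v = 0 := funext fun i => (mem_ker _).mp (hv i)
  refine (relUnimodular_ker_snoc_iff f).mpr ⟨?_, ht, a, s - a ⬝ᵥ v, ha, ?_, ?_⟩
  · funext i
    simpa [(mem_ker _).mp (hv i)] using congrFun hy i
  · rw [map_sub, hs, RingHom.map_dotProduct, hfv, dotProduct_zero, sub_zero]
  · rw [← has]
    simp only [dotProduct, mul_add, Finset.sum_add_distrib, sub_mul, Finset.sum_mul, mul_assoc]
    abel

theorem RelReducible.of_snoc_add {I : TwoSidedIdeal R} {y v : Fin (m + 1) → R} {t : R}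
    (hv : ∀ i, v i ∈ I)
    (h : RelReducible I (Fin.snoc (fun i => y i + v i * t) t : Fin (m + 2) → R)) :
    RelReducible I (Fin.snoc y t : Fin (m + 2) → R) := by
  obtain ⟨w, hw, hu⟩ := h
  refine ⟨v + w, fun i => I.add_mem (hv i) (hw i), ?_⟩
  simpa only [Fin.snoc_castSucc, Fin.snoc_last, Pi.add_apply, add_mul, add_assoc] using hu

theorem RelReducible.of_snoc_mul {I J : TwoSidedIdeal R} (hIJ : I ≤ J) {y : Fin (m + 1) → R}
    {c t : R} (h : RelReducible I (Fin.snoc y (c * t) : Fin (m + 2) → R)) :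
    RelReducible J (Fin.snoc y t : Fin (m + 2) → R) := by
  obtain ⟨w, hw, hu⟩ := h
  refine ⟨fun i => w i * c, fun i => hIJ (I.mul_mem_right _ _ (hw i)), ?_⟩
  simp only [Fin.snoc_castSucc, Fin.snoc_last, mul_assoc] at hu ⊢
  exact hu.mono hIJ

theorem RelReducible.of_snoc_mulVec {M : (Matrix (Fin (m + 1)) (Fin (m + 1)) R)ˣ}
    (hM : M ∈ congruenceSubgroup f _) {y : Fin (m + 1) → R} {t : R}
    (h : RelReducible (ker f) (Fin.snoc (↑M *ᵥ y) t : Fin (m + 2) → R)) :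
    RelReducible (ker f) (Fin.snoc y t : Fin (m + 2) → R) := by
  obtain ⟨w, hw, hu⟩ := h
  refine ⟨(↑M⁻¹ : Matrix (Fin (m + 1)) (Fin (m + 1)) R) *ᵥ w, fun i => (mem_ker f).mpr
    ((congrFun (comp_mulVec_of_mem (inv_mem hM) w) i).trans ((mem_ker f).mp (hw i))), ?_⟩
  simp only [Fin.snoc_castSucc, Fin.snoc_last] at hu ⊢
  have hu' := hu.mulVec_of_mem (inv_mem hM)
  rwa [mulVec_add_mul_const, mulVec_mulVec, M.inv_mul, one_mulVec] at hu'

theorem RingHom.prod_comp_eq_single_zero (ψ : R →+* A) {b : Fin (m + 1) → R}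
    (hf : f ∘ b = Pi.single 0 1) (hψ : ψ ∘ b = Pi.single 0 1) :
    f.prod ψ ∘ b = Pi.single 0 1 := by
  funext i
  ext
  · simpa [Pi.single_apply, apply_ite Prod.fst] using congrFun hf i
  · simpa [Pi.single_apply, apply_ite Prod.snd] using congrFun hψ i

theorem ker_prod_le (ψ : R →+* A) : ker (f.prod ψ) ≤ ker f :=
  fun _ hx => (mem_ker _).mpr (congrArg Prod.fst ((mem_ker _).mp hx))

theorem exists_relUnimodular_ker_snoc_mul {T : Type*} [Ring T] (g : R →+* T)
    {y a : Fin (m + 1) → R} {s t : R} (hy : g ∘ y = Pi.single 0 1) (has : a ⬝ᵥ y + s * t = 1) :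
    ∃ c, RelUnimodular (ker g) (Fin.snoc y (c * t) : Fin (m + 2) → R) := by
  set z := 1 - y 0
  have hy0 : g (y 0) = 1 := by simpa using congrFun hy 0
  have hz : g z = 0 := by simp [z, hy0]
  refine ⟨z * s, (relUnimodular_ker_snoc_iff g).mpr
    ⟨hy, by simp [hz], Pi.single 0 (1 + z) + (z * z) • a, z, ?_, hz, ?_⟩⟩
  · funext i
    simp [hz, Pi.single_apply, apply_ite g]
  · rw [add_dotProduct, single_dotProduct, smul_dotProduct, smul_eq_mul]
    calc (1 + z) * y 0 + z * z * (a ⬝ᵥ y) + z * (z * s * t)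
        = (1 + z) * (1 - z) + z * z * (a ⬝ᵥ y + s * t) := by simp only [z]; noncomm_ring
      _ = 1 := by rw [has]; noncomm_ring

end Relative

section Bounds

variable {R S A : Type*} [Ring R] [Ring S] [Ring A] {f : R →+* S} {ψ : R →+* A}

theorem relSRleq_ker_of_relSRleq_ker_prod (hψ : ∀ a, ∃ r, f r = 0 ∧ ψ r = a) {k : ℕ}
    (hSR : SRleq A (k + 1)) (hER : ERleq A k)
    (hJ : RelSRleq (ker (f.prod ψ)) (k + 1)) : RelSRleq (ker f) (k + 1) := by
  intro m hm x hx
  rw [← Fin.snoc_init_self x] at hx ⊢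
  generalize Fin.init x = y, x (Fin.last _) = t at hx ⊢
  obtain ⟨u, hu⟩ := hSR (m + 1) hm _ (hx.unimodular.map ψ)
  choose v hfv hψv using fun i => hψ (u i)
  have hv : ∀ i, v i ∈ ker f := fun i => (mem_ker f).mpr (hfv i)
  refine RelReducible.of_snoc_add hv ?_
  have hψy : Unimodular (ψ ∘ fun i => y i + v i * t) := by
    simpa [Function.comp_def, hψv] using hu
  obtain ⟨L, hL, hLy⟩ := hER (m + 1) (by omega) _ _ hψy unimodular_single_zero
  obtain ⟨M, hM, hMψ⟩ := exists_mem_congruenceSubgroup_map_eq_prod ψ hψ L hL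
  refine RelReducible.of_snoc_mulVec hM ?_
  obtain ⟨hfy, -, a, s, -, -, has⟩ :=
    (relUnimodular_ker_snoc_iff f).mp ((hx.snoc_add hv).snoc_mulVec hM)
  obtain ⟨c, hc⟩ := exists_relUnimodular_ker_snoc_mul (f.prod ψ)
    (f.prod_comp_eq_single_zero ψ hfy (by rw [ψ.comp_mulVec, hMψ, hLy])) has
  exact (hJ m hm _ hc).of_snoc_mul (ker_prod_le ψ)

theorem srleq_of_relSRleq_ker (hψ : ∀ a, ∃ r, f r = 0 ∧ ψ r = a) {k : ℕ}
    (hk : 1 ≤ k) (hER : ERleq A k)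
    (hN : RelSRleq (ker f) k) : SRleq A k := by
  intro m hm β hβ
  obtain ⟨m, rfl⟩ : ∃ m', m = m' + 1 := ⟨m - 1, by omega⟩
  obtain ⟨L, hL, hLβ⟩ := hER (m + 2) (by omega) _ _ unimodular_single_zero hβ
  obtain ⟨M, hM, hMψ⟩ := exists_mem_congruenceSubgroup_map_eq_prod ψ hψ L hL
  have hψx : ψ ∘ ((M : Matrix (Fin (m + 2)) (Fin (m + 2)) R) *ᵥ Pi.single 0 1) = β := by
    rw [ψ.comp_mulVec, hMψ, ψ.comp_single_one 0, hLβ]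
  obtain ⟨v, -, hv⟩ := hN m (by omega) _ (relUnimodular_ker_single_zero.mulVec_of_mem hM)
  refine ⟨ψ ∘ v, ?_⟩
  rw [← hψx]
  simpa only [Function.comp_def, map_add, map_mul] using hv.unimodular.map ψ

theorem relSr_ker_eq (hψ : ∀ a, ∃ r, f r = 0 ∧ ψ r = a) {k : ℕ}
    (hk : 1 ≤ k) (hsr : sr A = (k + 1 : ℕ)) (her : er A ≤ k)
    (hJ : relSr (ker (f.prod ψ)) ≤ (k + 1 : ℕ)) : relSr (ker f) = (k + 1 : ℕ) := by
  have hER := er_le_iff.mp her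
  refine le_antisymm (relSr_le_iff.mpr (relSRleq_ker_of_relSRleq_ker_prod hψ
    (sr_le_iff.mp hsr.le) hER (relSr_le_iff.mp hJ))) (not_lt.mp fun h => ?_)
  rw [Nat.cast_add_one, ENat.lt_natCast_add_one_iff, relSr_le_iff] at h
  have := sr_le_iff.mpr (srleq_of_relSRleq_ker hψ hk hER h)
  rw [hsr, Nat.cast_le] at this
  omega

end Bounds

section Unitization

variable {A B : Type*} [Ring A] [NonUnitalRing B] (I : TwoSidedIdeal B)
  (e : I.ringCon.Quotient ≃+* A)

theorem ringCon_coe_eq_zero_iff {b : B} : (b : I.ringCon.Quotient) = 0 ↔ b ∈ I := by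
  rw [← RingCon.coe_zero, RingCon.eq]
  rfl

noncomputable def unitizationLift : Unitization ℤ B →+* A :=
  (Unitization.lift (R := ℤ)
    { toFun := fun b : B => e b
      map_smul' := fun k b => by simp
      map_zero' := by simp
      map_add' := fun b b' => by simp
      map_mul' := fun b b' => by simp }).toRingHom

theorem unitizationLift_apply (x : Unitization ℤ B) :
    unitizationLift I e x = x.fst + e x.snd := by
  simp [unitizationLift]

theorem nuIdeal_eq_ker : nuIdeal B = ker (Unitization.fstHom ℤ B).toRingHom :=
  TwoSidedIdeal.ext fun x => (TwoSidedIdeal.mem_mk' _ _ _ _ _ _ x).trans (by simp [mem_ker])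

theorem liftIdeal_eq_ker :
    liftIdeal I = ker ((Unitization.fstHom ℤ B).toRingHom.prod (unitizationLift I e)) := by
  refine TwoSidedIdeal.ext fun x => (TwoSidedIdeal.mem_mk' _ _ _ _ _ _ x).trans ?_
  simp only [Set.mem_ofPred_eq, mem_ker, RingHom.prod_apply, Prod.mk_eq_zero,
    AlgHom.toRingHom_eq_coe, RingHom.coe_coe, Unitization.fstHom_apply, unitizationLift_apply]
  refine and_congr_right fun h => ?_
  rw [h, Int.cast_zero, zero_add, map_eq_zero_iff e e.injective, ringCon_coe_eq_zero_iff]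

theorem exists_fst_eq_zero_unitizationLift_eq (a : A) :
    ∃ x : Unitization ℤ B, Unitization.fstHom ℤ B x = 0 ∧ unitizationLift I e x = a := by
  obtain ⟨b, hb⟩ := Quot.exists_rep (e.symm a)
  refine ⟨b, by simp, ?_⟩
  rw [unitizationLift_apply]
  simp only [Unitization.fst_inr, Int.cast_zero, Unitization.snd_inr, zero_add]
  exact (congrArg e hb).trans (e.apply_symm_apply a)

end Unitization

theorem sr_nonunital_extension_general
    {A B : Type*} [Ring A]
    [NonUnitalRing B]
    (n : ℕ) (hn : 2 ≤ n) (hsr : sr A = n) (her : er A < (n : ℕ∞))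
    (I : TwoSidedIdeal B) (iso : Nonempty (I.ringCon.Quotient ≃+* A))
    (hI : relSr (R := Unitization ℤ B) (liftIdeal I) ≤ (n : ℕ∞)) :
    srNU B = n := by
  obtain ⟨e⟩ := iso
  obtain ⟨k, rfl⟩ : ∃ k, n = k + 1 := ⟨n - 1, by omega⟩
  rw [Nat.cast_add_one, ENat.lt_natCast_add_one_iff] at her
  rw [liftIdeal_eq_ker I e] at hI
  rw [srNU, nuIdeal_eq_ker]
  exact relSr_ker_eq (exists_fst_eq_zero_unitizationLift_eq I e) (by omega) hsr her hI

/-- Corollary 1.9: let `A` be a unital `K`-algebra with `sr(A) = n ≥ 2` and `er(A) < n`.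
Then for any (possibly non-unital) `K`-algebra `B` and two-sided ideal `I` of `B` with
`B/I ≅ A` and `sr(I) ≤ n`, one has `sr(B) = n`. -/
theorem sr_nonunital_extension
    (K : Type*) [Field K] {A B : Type*} [Ring A] [Algebra K A]
    [NonUnitalRing B] [Module K B] [SMulCommClass K B B] [IsScalarTower K B B]
    (n : ℕ) (hn : 2 ≤ n) (hsr : sr A = n) (her : er A < (n : ℕ∞))
    (I : TwoSidedIdeal B) (iso : Nonempty (I.ringCon.Quotient ≃+* A))
    (hI : relSr (R := Unitization ℤ B) (liftIdeal I) ≤ (n : ℕ∞)) :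
    srNU B = n :=
  sr_nonunital_extension_general n hn hsr her I iso hI
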